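/- Fix D ≥ 1 and set P = (log B)^D and Q = B^{1/3}P^{−3}. There is a constant C (depending on D and on the βⱼ, ηⱼ) such that for all B ≥ 3 and all integers q with 1 ≤ q ≤ P: |∫_{1/(qQ) ≤ |λ| ≤ 1/2} ∏_{j=1}^{4} ( Σ_{m ∈ I_j ∩ ℤ} e(βⱼλm) ) dλ| ≤ C·B(log B)^{−D}, where e(t) = e^{2πit}. In particular, ∫_{−1/2}^{1/2} Σ_{(m₁,…,m₄), mⱼ ∈ I_j} e(λ(β₁m₁+β₂m₂+β₃m₃+β₄m₄)) dλ and ∫_{−1/(qQ)}^{1/(qQ)} Σ_{(m₁,…,m₄), mⱼ ∈ I_j} e(λ(β₁m₁+β₂m₂+β₃m₃+β₄m₄)) dλ differ by at most C·B(log B)^{−D}. -/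

import Mathlib

open MeasureTheory

/-- The interval `I = [ηB^{1/3} - B^{1/3}/log B, ηB^{1/3} + B^{1/3}/log B]`. -/
noncomputable def shortInterval (η B : ℝ) : Set ℝ :=
  Set.Icc (η * B ^ ((1 : ℝ) / 3) - B ^ ((1 : ℝ) / 3) / Real.log B)
          (η * B ^ ((1 : ℝ) / 3) + B ^ ((1 : ℝ) / 3) / Real.log B)

/-- The product `∏_{j=1}^4 Σ_{m ∈ I_j ∩ ℤ} e(βⱼλm)`, which equals the sum over integer
quadruples `(m₁,…,m₄)` with `mⱼ ∈ I_j` of `e(λ(β₁m₁+β₂m₂+β₃m₃+β₄m₄))`. -/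
noncomputable def trigProd (β : Fin 4 → ℤ) (η : Fin 4 → ℝ) (B l : ℝ) : ℂ :=
  ∏ j : Fin 4, ∑ᶠ m ∈ {m : ℤ | (m : ℝ) ∈ shortInterval (η j) B},
    Complex.exp (2 * (Real.pi : ℂ) * Complex.I * ((β j : ℂ) * (m : ℂ) * (l : ℂ)))

open Real

lemma finsumIcc (a b : ℝ) (f : ℤ → ℂ) :
    ∑ᶠ m ∈ {m : ℤ | (m:ℝ) ∈ Set.Icc a b}, f m = ∑ m ∈ Finset.Icc ⌈a⌉ ⌊b⌋, f m := by
  rw [← finsum_mem_coe_finset]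
  congr 1
  ext m
  simp [Int.ceil_le, Int.le_floor]

lemma geom_aux (z : ℂ) (hz : ‖z‖ = 1) (hz1 : z ≠ 1) (a b : ℤ) :
    ‖(∑ m ∈ Finset.Icc a b, z ^ m)‖ ≤ 2 / ‖(z - 1)‖ := by
  have hz0 : z ≠ 0 := by intro h; simp [h] at hz
  have hd : 0 < ‖(z - 1)‖ := by
    simpa using norm_pos_iff.mpr (sub_ne_zero.mpr hz1)
  rw [Int.Icc_eq_finset_map, Finset.sum_map]
  simp only [Function.Embedding.trans_apply, Nat.castEmbedding_apply, addLeftEmbedding_apply]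
  have h1 : ∀ k ∈ Finset.range (b + 1 - a).toNat, z ^ (a + (k:ℤ)) = z ^ a * z ^ k := fun k _ => by
    rw [zpow_add₀ hz0, zpow_natCast]
  rw [Finset.sum_congr rfl h1, ← Finset.mul_sum, geom_sum_eq hz1]
  rw [norm_mul, norm_div, norm_zpow, hz, one_zpow, one_mul]
  have h2 : ‖(z ^ (b + 1 - a).toNat - 1)‖ ≤ 2 := by
    calc ‖(z ^ (b + 1 - a).toNat - 1)‖
        ≤ ‖(z ^ (b + 1 - a).toNat)‖ + ‖(1:ℂ)‖ := by
          simpa using norm_sub_le (z ^ (b + 1 - a).toNat) 1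
      _ ≤ 2 := by rw [norm_pow, hz]; norm_num
  gcongr

lemma exp_lower (t : ℝ) (ht : |t| ≤ 1/2) :
    4 * |t| ≤ ‖(Complex.exp ((2*π*t : ℝ) * Complex.I) - 1)‖ := by
  have h1 : Complex.exp ((2*π*t : ℝ) * Complex.I) - 1
      = (↑(Real.cos (2*π*t) - 1) + ↑(Real.sin (2*π*t)) * Complex.I) := by
    rw [Complex.exp_mul_I, ← Complex.ofReal_cos, ← Complex.ofReal_sin]
    push_cast
    ring
  rw [h1, Complex.norm_add_mul_I]
  have hsin : 2 * |t| ≤ Real.sin (π * |t|) := by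
    have h := Real.mul_le_sin (x := π * |t|) (by positivity)
      (by nlinarith [Real.pi_pos, abs_nonneg t])
    have he : 2 / π * (π * |t|) = 2 * |t| := by
      field_simp [Real.pi_ne_zero]
    linarith [he ▸ h]
  have hsq : Real.sin (π * t) ^ 2 = Real.sin (π * |t|) ^ 2 := by
    rcases abs_cases t with ⟨h, _⟩ | ⟨h, _⟩
    · rw [h]
    · rw [h]; rw [show π * -t = -(π * t) by ring, Real.sin_neg]; ring
  have hid : (Real.cos (2*π*t) - 1)^2 + Real.sin (2*π*t)^2 = 4 * Real.sin (π * t) ^ 2 := by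
    have h2 := Real.sin_sq_eq_half_sub (π * t)
    have h3 := Real.sin_sq_add_cos_sq (2*π*t)
    rw [show 2 * (π * t) = 2*π*t by ring] at h2
    nlinarith
  rw [hid]
  rw [show (4:ℝ) * Real.sin (π*t)^2 = (2 * Real.sin (π*|t|))^2 by rw [hsq]; ring]
  rw [Real.sqrt_sq (by linarith [abs_nonneg t])]
  linarith

lemma factor_triv (b : ℤ) (l : ℝ) (A Bd : ℤ) :
    ‖(∑ m ∈ Finset.Icc A Bd,
      Complex.exp (2 * (π:ℂ) * Complex.I * ((b:ℂ) * (m:ℂ) * (l:ℂ))))‖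
      ≤ (Finset.Icc A Bd).card := by
  calc ‖(∑ m ∈ Finset.Icc A Bd,
        Complex.exp (2 * (π:ℂ) * Complex.I * ((b:ℂ) * (m:ℂ) * (l:ℂ))))‖
      ≤ ∑ m ∈ Finset.Icc A Bd,
        ‖(Complex.exp (2 * (π:ℂ) * Complex.I * ((b:ℂ) * (m:ℂ) * (l:ℂ))))‖ :=
        norm_sum_le _ _
    _ = ∑ m ∈ Finset.Icc A Bd, (1:ℝ) := by
        refine Finset.sum_congr rfl fun m _ => ?_
        rw [show (2*(π:ℂ)*Complex.I*((b:ℂ)*(m:ℂ)*(l:ℂ)))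
          = ((2*π*b*m*l : ℝ):ℂ)*Complex.I by push_cast; ring]
        exact Complex.norm_exp_ofReal_mul_I _
    _ = (Finset.Icc A Bd).card := by simp

lemma factor_geom (b : ℤ) (hb : b = 1 ∨ b = -1) (l : ℝ) (hl0 : l ≠ 0) (hl : |l| ≤ 1/2)
    (A Bd : ℤ) :
    ‖(∑ m ∈ Finset.Icc A Bd,
      Complex.exp (2 * (π:ℂ) * Complex.I * ((b:ℂ) * (m:ℂ) * (l:ℂ))))‖ ≤ 1 / (2 * |l|) := by
  set z : ℂ := Complex.exp ((2*π*((b:ℝ)*l) : ℝ) * Complex.I) with hzdef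
  have hlpos : 0 < |l| := abs_pos.mpr hl0
  have habs : ‖z‖ = 1 := Complex.norm_exp_ofReal_mul_I _
  have htabs : |(b:ℝ) * l| = |l| := by rcases hb with h|h <;> simp [h, abs_mul]
  have hlow : 4 * |l| ≤ ‖(z - 1)‖ := by
    have h := exp_lower ((b:ℝ)*l) (by rw [htabs]; exact hl)
    rwa [htabs] at h
  have hz1 : z ≠ 1 := by
    intro h
    rw [h] at hlow
    simp at hlow
    linarith
  have hterm : ∀ m : ℤ, Complex.exp (2 * (π:ℂ) * Complex.I * ((b:ℂ) * (m:ℂ) * (l:ℂ)))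
      = z ^ m := by
    intro m
    rw [hzdef, ← Complex.exp_int_mul]
    congr 1
    push_cast
    ring
  calc ‖(∑ m ∈ Finset.Icc A Bd,
        Complex.exp (2 * (π:ℂ) * Complex.I * ((b:ℂ) * (m:ℂ) * (l:ℂ))))‖
      = ‖(∑ m ∈ Finset.Icc A Bd, z ^ m)‖ := by
        rw [Finset.sum_congr rfl fun m _ => hterm m]
    _ ≤ 2 / ‖(z - 1)‖ := geom_aux z habs hz1 A Bd
    _ ≤ 2 / (4 * |l|) := by gcongr
    _ = 1 / (2 * |l|) := by
        rw [div_eq_div_iff (by linarith) (by linarith)]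
        ring

noncomputable def Ffun (bb : ℤ) (a c l : ℝ) : ℂ :=
  ∑ m ∈ Finset.Icc ⌈a⌉ ⌊c⌋,
    Complex.exp (2 * (Real.pi:ℂ) * Complex.I * ((bb:ℂ) * (m:ℂ) * (l:ℂ)))

lemma Ffun_cont (bb : ℤ) (a c : ℝ) : Continuous (Ffun bb a c) := by
  unfold Ffun
  exact continuous_finset_sum _ fun m _ =>
    Complex.continuous_exp.comp (continuous_const.mul
      (continuous_const.mul Complex.continuous_ofReal))

lemma Ffun_card (a c : ℝ) (hac : a ≤ c) : ((Finset.Icc ⌈a⌉ ⌊c⌋).card : ℝ) ≤ c - a + 1 := by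
  rw [Int.card_Icc]
  rcases le_or_gt (⌊c⌋ + 1 - ⌈a⌉) 0 with h | h
  · rw [Int.toNat_of_nonpos h]
    push_cast
    linarith
  · have he : ((⌊c⌋ + 1 - ⌈a⌉).toNat : ℤ) = ⌊c⌋ + 1 - ⌈a⌉ := Int.toNat_of_nonneg h.le
    have h1 : ((⌊c⌋ : ℝ)) ≤ c := Int.floor_le c
    have h2 : (a : ℝ) ≤ (⌈a⌉ : ℝ) := Int.le_ceil a
    have h3 : (((⌊c⌋ + 1 - ⌈a⌉).toNat : ℤ) : ℝ) = (⌊c⌋ : ℝ) + 1 - (⌈a⌉ : ℝ) := by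
      rw [he]; push_cast; ring
    rw [← Int.cast_natCast, h3]
    linarith

lemma Ffun_triv (bb : ℤ) (a c l : ℝ) :
    ‖(Ffun bb a c l)‖ ≤ ((Finset.Icc ⌈a⌉ ⌊c⌋).card : ℝ) := factor_triv bb l _ _

lemma Ffun_geom (bb : ℤ) (hb : bb = 1 ∨ bb = -1) (a c l : ℝ) (hl0 : l ≠ 0) (hl : |l| ≤ 1/2) :
    ‖(Ffun bb a c l)‖ ≤ 1 / (2 * |l|) := factor_geom bb hb l hl0 hl _ _

lemma prod_triv (β : Fin 4 → ℤ) (a c : Fin 4 → ℝ) (l : ℝ) (N : ℝ)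
    (hN : ∀ j, ((Finset.Icc ⌈a j⌉ ⌊c j⌋).card : ℝ) ≤ N) :
    ‖(∏ j : Fin 4, Ffun (β j) (a j) (c j) l)‖ ≤ N ^ 4 := by
  rw [norm_prod]
  calc ∏ j : Fin 4, ‖(Ffun (β j) (a j) (c j) l)‖
      ≤ ∏ _j : Fin 4, N := by
        refine Finset.prod_le_prod (fun j _ => norm_nonneg _) fun j _ =>
          (Ffun_triv _ _ _ _).trans (hN j)
    _ = N ^ 4 := by simp [Finset.prod_const]

lemma prod_geom (β : Fin 4 → ℤ) (hβ : ∀ j, β j = 1 ∨ β j = -1) (a c : Fin 4 → ℝ) (l : ℝ)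
    (hl0 : l ≠ 0) (hl : |l| ≤ 1/2) (N : ℝ)
    (hN : ∀ j, ((Finset.Icc ⌈a j⌉ ⌊c j⌋).card : ℝ) ≤ N) :
    ‖(∏ j : Fin 4, Ffun (β j) (a j) (c j) l)‖ ≤ N / (8 * |l|^3) := by
  have habs : (0:ℝ) < |l| := abs_pos.mpr hl0
  have hN0 : (0:ℝ) ≤ N := le_trans (by positivity) (hN 0)
  rw [norm_prod, Fin.prod_univ_four]
  have h0 := (Ffun_triv (β 0) (a 0) (c 0) l).trans (hN 0)
  have h1 := Ffun_geom (β 1) (hβ 1) (a 1) (c 1) l hl0 hl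
  have h2 := Ffun_geom (β 2) (hβ 2) (a 2) (c 2) l hl0 hl
  have h3 := Ffun_geom (β 3) (hβ 3) (a 3) (c 3) l hl0 hl
  have key : ‖(Ffun (β 0) (a 0) (c 0) l)‖ * ‖(Ffun (β 1) (a 1) (c 1) l)‖
      * ‖(Ffun (β 2) (a 2) (c 2) l)‖ * ‖(Ffun (β 3) (a 3) (c 3) l)‖
      ≤ N * (1/(2*|l|)) * (1/(2*|l|)) * (1/(2*|l|)) := by
    have n0 := norm_nonneg (Ffun (β 0) (a 0) (c 0) l)
    have n1 := norm_nonneg (Ffun (β 1) (a 1) (c 1) l)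
    have n2 := norm_nonneg (Ffun (β 2) (a 2) (c 2) l)
    have n3 := norm_nonneg (Ffun (β 3) (a 3) (c 3) l)
    have p1 : (0:ℝ) ≤ 1/(2*|l|) := by positivity
    exact mul_le_mul (mul_le_mul (mul_le_mul h0 h1 n1 hN0) h2 n2 (by positivity)) h3 n3
      (by positivity)
  calc ‖(Ffun (β 0) (a 0) (c 0) l)‖ * ‖(Ffun (β 1) (a 1) (c 1) l)‖
      * ‖(Ffun (β 2) (a 2) (c 2) l)‖ * ‖(Ffun (β 3) (a 3) (c 3) l)‖
      ≤ N * (1/(2*|l|)) * (1/(2*|l|)) * (1/(2*|l|)) := key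
    _ = N / (8 * |l|^3) := by
        ring

lemma pos_piece (c K : ℝ) (hc : 0 < c) (hK : 0 ≤ K) :
    ∫ l in Set.Icc c (1/2:ℝ), K / |l|^3 ≤ K / (2 * c^2) := by
  rcases le_or_gt c (1/2) with hc2 | hc2
  · have h1 : ∫ l in Set.Icc c (1/2:ℝ), K / |l|^3 = ∫ l in c..(1/2:ℝ), K / |l|^3 := by
      rw [MeasureTheory.integral_Icc_eq_integral_Ioc, intervalIntegral.integral_of_le hc2]
    have h2 : ∫ l in c..(1/2:ℝ), K / |l|^3 = ∫ l in c..(1/2:ℝ), K * l^(-3:ℤ) := by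
      refine intervalIntegral.integral_congr fun l hl => ?_
      rw [Set.uIcc_of_le hc2] at hl
      have hl0 : 0 < l := lt_of_lt_of_le hc hl.1
      rw [abs_of_pos hl0, zpow_neg, div_eq_mul_inv]
      norm_num
    have h3 : ∫ l in c..(1/2:ℝ), K * l^(-3:ℤ)
        = K * (((1/2:ℝ)^(-2:ℤ) - c^(-2:ℤ))/(-2)) := by
      rw [intervalIntegral.integral_const_mul, integral_zpow]
      · norm_num
      · right
        constructor
        · norm_num
        · rw [Set.uIcc_of_le hc2]
          intro h
          exact absurd h.1 (not_le.mpr hc)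
    rw [h1, h2, h3]
    have h4 : ((1/2:ℝ)^(-2:ℤ) - c^(-2:ℤ))/(-2) ≤ 1/(2*c^2) := by
      have hz : (c:ℝ)^(-2:ℤ) = (c^2)⁻¹ := by
        rw [zpow_neg]
        norm_cast
      have hhalf : ((1/2:ℝ))^(-2:ℤ) = 4 := by norm_num
      rw [hz, hhalf, show (1:ℝ)/(2*c^2) = (c^2)⁻¹ * (1/2) by ring]
      linarith
    calc K * (((1/2:ℝ)^(-2:ℤ) - c^(-2:ℤ))/(-2)) ≤ K * (1/(2*c^2)) := by
          exact mul_le_mul_of_nonneg_left h4 hK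
      _ = K / (2*c^2) := by ring
  · rw [Set.Icc_eq_empty (by linarith)]
    simp
    positivity

lemma g_union (c K : ℝ) (hc : 0 < c) (hK : 0 ≤ K) :
    IntegrableOn (fun l => K / |l|^3) (Set.Icc (-(1/2):ℝ) (-c) ∪ Set.Icc c (1/2)) volume ∧
    ∫ l in (Set.Icc (-(1/2):ℝ) (-c) ∪ Set.Icc c (1/2)), K / |l|^3 ≤ K / c^2 := by
  have hcont : ContinuousOn (fun l : ℝ => K / |l|^3) {l : ℝ | l ≠ 0} := by
    apply ContinuousOn.div continuousOn_const
    · exact (continuous_abs.continuousOn).pow 3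
    · intro x hx
      exact pow_ne_zero 3 (abs_ne_zero.mpr hx)
  have hsub1 : Set.Icc c (1/2:ℝ) ⊆ {l : ℝ | l ≠ 0} := fun x hx =>
    ne_of_gt (lt_of_lt_of_le hc hx.1)
  have hsub2 : Set.Icc (-(1/2):ℝ) (-c) ⊆ {l : ℝ | l ≠ 0} := fun x hx =>
    ne_of_lt (lt_of_le_of_lt hx.2 (by linarith))
  have hint1 : IntegrableOn (fun l : ℝ => K / |l|^3) (Set.Icc c (1/2:ℝ)) volume :=
    (hcont.mono hsub1).integrableOn_compact isCompact_Icc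
  have hint2 : IntegrableOn (fun l : ℝ => K / |l|^3) (Set.Icc (-(1/2):ℝ) (-c)) volume :=
    (hcont.mono hsub2).integrableOn_compact isCompact_Icc
  have hdisj : Disjoint (Set.Icc (-(1/2):ℝ) (-c)) (Set.Icc c (1/2:ℝ)) := by
    rw [Set.disjoint_left]
    intro x hx hx'
    have h1 := hx.2
    have h2 := hx'.1
    linarith
  refine ⟨hint2.union hint1, ?_⟩
  rw [setIntegral_union hdisj measurableSet_Icc hint2 hint1]
  have hneg : ∫ l in Set.Icc (-(1/2):ℝ) (-c), K / |l|^3 ≤ K / (2*c^2) := by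
    rcases le_or_gt c (1/2) with hc2 | hc2
    · have he : ∫ l in Set.Icc (-(1/2):ℝ) (-c), K / |l|^3
          = ∫ l in (-(1/2):ℝ)..(-c), K / |l|^3 := by
        rw [MeasureTheory.integral_Icc_eq_integral_Ioc,
          intervalIntegral.integral_of_le (by linarith)]
      have he2 : ∫ l in c..(1/2:ℝ), K / |(-l)|^3 = ∫ l in (-(1/2):ℝ)..(-c), K / |l|^3 :=
        intervalIntegral.integral_comp_neg (fun l => K / |l|^3)
      have he3 : ∫ l in c..(1/2:ℝ), K / |(-l)|^3 = ∫ l in c..(1/2:ℝ), K / |l|^3 := by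
        simp [abs_neg]
      rw [he, ← he2, he3]
      have he4 : ∫ l in c..(1/2:ℝ), K / |l|^3 = ∫ l in Set.Icc c (1/2:ℝ), K / |l|^3 := by
        rw [MeasureTheory.integral_Icc_eq_integral_Ioc,
          intervalIntegral.integral_of_le hc2]
      rw [he4]
      exact pos_piece c K hc hK
    · rw [Set.Icc_eq_empty (by intro h; linarith [neg_le_neg hc2.le])]
      simp
      positivity
  have hpos := pos_piece c K hc hK
  have heq : K / (2*c^2) + K / (2*c^2) = K / c^2 := by ring
  linarith

lemma exists_B0 (D : ℝ) :
    ∃ B₀ : ℝ, 3 ≤ B₀ ∧ ∀ B : ℝ, B₀ ≤ B → 2 * Real.log B ^ (3*D) ≤ B ^ ((1:ℝ)/3) := by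
  have h := isLittleO_log_rpow_rpow_atTop (3*D) (by norm_num : (0:ℝ) < 1/3)
  have h2 := h.def (by norm_num : (0:ℝ) < 1/2)
  rw [Filter.eventually_atTop] at h2
  obtain ⟨A, hA⟩ := h2
  refine ⟨max A 3, le_max_right _ _, fun B hB => ?_⟩
  have hB3 : (3:ℝ) ≤ B := le_trans (le_max_right A 3) hB
  have hball := hA B (le_trans (le_max_left A 3) hB)
  rw [Real.norm_eq_abs, Real.norm_eq_abs,
    abs_of_nonneg (Real.rpow_nonneg (Real.log_nonneg (by linarith)) _),
    abs_of_nonneg (Real.rpow_nonneg (by linarith : (0:ℝ) ≤ B) _)] at hball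
  linarith

lemma one_le_log (B : ℝ) (hB : 3 ≤ B) : 1 ≤ Real.log B := by
  rw [Real.le_log_iff_exp_le (by linarith)]
  calc Real.exp 1 ≤ 2.7182818286 := Real.exp_one_lt_d9.le
    _ ≤ B := by norm_num; linarith

lemma log_le_3X (B : ℝ) (hB : 3 ≤ B) : Real.log B ≤ 3 * B ^ ((1:ℝ)/3) := by
  have hX : 0 < B ^ ((1:ℝ)/3) := Real.rpow_pos_of_pos (by linarith) _
  have hXB : (B ^ ((1:ℝ)/3)) ^ (3:ℕ) = B := by
    rw [← Real.rpow_natCast (B ^ ((1:ℝ)/3)) 3, ← Real.rpow_mul (by linarith : (0:ℝ) ≤ B)]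
    norm_num
  calc Real.log B = Real.log ((B ^ ((1:ℝ)/3)) ^ (3:ℕ)) := by rw [hXB]
    _ = 3 * Real.log (B ^ ((1:ℝ)/3)) := by rw [Real.log_pow]; norm_num
    _ ≤ 3 * (B ^ ((1:ℝ)/3) - 1) := by
        have := Real.log_le_sub_one_of_pos hX
        linarith
    _ ≤ 3 * B ^ ((1:ℝ)/3) := by linarith

lemma trigProd_eq_prod (β : Fin 4 → ℤ) (η : Fin 4 → ℝ) (B l : ℝ) :
    trigProd β η B l = ∏ j : Fin 4, Ffun (β j)
      (η j * B ^ ((1:ℝ)/3) - B ^ ((1:ℝ)/3) / Real.log B)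
      (η j * B ^ ((1:ℝ)/3) + B ^ ((1:ℝ)/3) / Real.log B) l := by
  unfold trigProd shortInterval Ffun
  exact Finset.prod_congr rfl fun j _ => finsumIcc _ _ _

set_option maxHeartbeats 1000000 in
lemma main_est (β : Fin 4 → ℤ) (hβ : ∀ j, β j = 1 ∨ β j = -1) (η : Fin 4 → ℝ)
    (D : ℝ) (hD : 1 ≤ D) (M : ℝ) (hM1 : 1 ≤ M)
    (B : ℝ) (hB : 3 ≤ B) (P Q : ℝ) (hP : P = Real.log B ^ D)
    (hQ : Q = B ^ ((1:ℝ)/3) / P ^ 3)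
    (q : ℕ) (hq : 1 ≤ q) (hqP : (q:ℝ) ≤ P)
    (hMB : Real.log B ≤ M ∨ 2 * Real.log B ^ (3*D) ≤ B ^ ((1:ℝ)/3)) :
    ‖(∫ l in {l : ℝ | 1 / (q * Q) ≤ |l| ∧ |l| ≤ 1 / 2},
        trigProd β η B l)‖ ≤ (5 + 2500 * M ^ (4*D-4)) * B * Real.log B ^ (-D) ∧
    ‖((∫ l in Set.Icc (-(1 / 2) : ℝ) (1 / 2), trigProd β η B l) -
        ∫ l in Set.Icc (-(1 / (q * Q))) (1 / (q * Q)), trigProd β η B l)‖ ≤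
      (5 + 2500 * M ^ (4*D-4)) * B * Real.log B ^ (-D) := by
  have hB0 : (0:ℝ) < B := by linarith
  set X := B ^ ((1:ℝ)/3) with hX_def
  set L := Real.log B with hL_def
  have hX0 : 0 < X := Real.rpow_pos_of_pos hB0 _
  have hL1 : 1 ≤ L := one_le_log B hB
  have hL0 : 0 < L := by linarith
  have hM0 : 0 < M := by linarith
  have hXB : X ^ (3:ℕ) = B := by
    rw [hX_def, ← Real.rpow_natCast (B ^ ((1:ℝ)/3)) 3, ← Real.rpow_mul hB0.le]
    norm_num
  have hL3X : L ≤ 3 * X := log_le_3X B hB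
  set N : ℝ := 5 * (X / L) with hN_def
  have hXL : (0:ℝ) < X / L := div_pos hX0 hL0
  have hN0 : (0:ℝ) ≤ N := by positivity
  have htp : ∀ l : ℝ, trigProd β η B l
      = ∏ j : Fin 4, Ffun (β j) (η j * X - X / L) (η j * X + X / L) l :=
    fun l => trigProd_eq_prod β η B l
  have hcard : ∀ j : Fin 4,
      ((Finset.Icc ⌈η j * X - X / L⌉ ⌊η j * X + X / L⌋).card : ℝ) ≤ N := by
    intro j
    have hac : η j * X - X / L ≤ η j * X + X / L := by linarith
    have h1 := Ffun_card (η j * X - X / L) (η j * X + X / L) hac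
    have h3 : 1 ≤ 3 * (X / L) := by
      rw [show (3:ℝ) * (X / L) = 3 * X / L by ring, le_div_iff₀ hL0]
      linarith
    rw [hN_def]
    have h2 : η j * X + X / L - (η j * X - X / L) + 1 = 2 * (X / L) + 1 := by ring
    rw [h2] at h1
    linarith
  have hbound_triv : ∀ l : ℝ, ‖(trigProd β η B l)‖ ≤ N ^ 4 := fun l => by
    rw [htp l]
    exact prod_triv β _ _ l N hcard
  have hbound_geom : ∀ l : ℝ, l ≠ 0 → |l| ≤ 1/2 →
      ‖(trigProd β η B l)‖ ≤ N / (8 * |l|^3) := fun l hl0 hl => by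
    rw [htp l]
    exact prod_geom β hβ _ _ l hl0 hl N hcard
  have hcont : Continuous (trigProd β η B) := by
    have he : trigProd β η B
        = fun l => ∏ j : Fin 4, Ffun (β j) (η j * X - X / L) (η j * X + X / L) l :=
      funext htp
    rw [he]
    exact continuous_finset_prod _ fun j _ => Ffun_cont _ _ _
  have hP0 : 0 < P := by rw [hP]; exact Real.rpow_pos_of_pos hL0 D
  have hQ0 : 0 < Q := by rw [hQ]; positivity
  have hq0 : (0:ℝ) < (q:ℝ) := by exact_mod_cast hq
  have hqQ0 : 0 < (q:ℝ) * Q := mul_pos hq0 hQ0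
  set c : ℝ := 1 / ((q:ℝ) * Q) with hc_def
  have hc0 : 0 < c := by positivity
  have hP3 : P ^ (3:ℕ) = L ^ (3*D) := by
    rw [hP, ← Real.rpow_natCast (L ^ D) 3, ← Real.rpow_mul hL0.le,
      show D * ((3:ℕ):ℝ) = 3*D by push_cast; ring]
  have hQX : Q = X / L ^ (3*D) := by rw [hQ, hP3]
  have hLD0 : (0:ℝ) < L ^ (3*D) := Real.rpow_pos_of_pos hL0 _
  have hcQ : c ≤ L ^ (3*D) / X := by
    rw [hc_def]
    have h1 : Q ≤ (q:ℝ) * Q := le_mul_of_one_le_left hQ0.le (by exact_mod_cast hq)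
    have h2 : 1 / ((q:ℝ)*Q) ≤ 1 / Q := one_div_le_one_div_of_le hQ0 h1
    have h3 : 1 / Q = L ^ (3*D) / X := by rw [hQX, one_div_div]
    linarith
  obtain ⟨hgInt, hgBound⟩ := g_union c (N/8) hc0 (by positivity)
  have key : ∀ T : Set ℝ, MeasurableSet T →
      (T ⊆ {l : ℝ | c ≤ |l| ∧ |l| ≤ 1/2}) →
      ‖∫ l in T, trigProd β η B l‖ ≤ 5 * B * L ^ (-D) := by
    intro T hTm hTsub
    have hTIcc : T ⊆ Set.Icc (-(1/2):ℝ) (1/2) := fun l hl => by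
      have h := (hTsub hl).2
      exact ⟨(abs_le.mp h).1, (abs_le.mp h).2⟩
    have hTA : T ⊆ Set.Icc (-(1/2):ℝ) (-c) ∪ Set.Icc c (1/2) := by
      intro l hl
      obtain ⟨h1, h2⟩ := hTsub hl
      rcases le_or_gt 0 l with h0 | h0
      · right
        rw [abs_of_nonneg h0] at h1 h2
        exact ⟨h1, h2⟩
      · left
        rw [abs_of_neg h0] at h1 h2
        exact ⟨by linarith, by linarith⟩
    have hInt : IntegrableOn (trigProd β η B) T volume :=
      (hcont.integrableOn_Icc).mono_set hTIcc
    have c1 : ‖∫ l in T, trigProd β η B l‖ ≤ ∫ l in T, ‖trigProd β η B l‖ :=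
      norm_integral_le_integral_norm _
    have c2 : ∫ l in T, ‖trigProd β η B l‖ ≤ ∫ l in T, (N/8) / |l|^3 := by
      refine setIntegral_mono_on hInt.norm (hgInt.mono_set hTA) hTm fun l hl => ?_
      obtain ⟨h1, h2⟩ := hTsub hl
      have hl0 : l ≠ 0 := by
        intro h
        rw [h] at h1
        simp at h1
        linarith
      rw [show (N/8) / |l|^3 = N / (8 * |l|^3) by ring]
      exact hbound_geom l hl0 h2
    have c3 : ∫ l in T, (N/8) / |l|^3
        ≤ ∫ l in (Set.Icc (-(1/2):ℝ) (-c) ∪ Set.Icc c (1/2)), (N/8) / |l|^3 := by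
      refine setIntegral_mono_set hgInt ?_ (HasSubset.Subset.eventuallyLE hTA)
      exact Filter.Eventually.of_forall fun l => by positivity
    have h6 : (N/8) / c^2 = (N/8) * ((q:ℝ)*Q)^2 := by
      rw [hc_def]
      field_simp
    have h7 : ((q:ℝ)*Q)^2 ≤ (P*Q)^2 := by
      have hh : (q:ℝ)*Q ≤ P*Q := mul_le_mul_of_nonneg_right hqP hQ0.le
      exact pow_le_pow_left₀ (by positivity) hh 2
    have hPQ : P * Q = X * L ^ (D - 3*D) := by
      rw [hP, hQX, Real.rpow_sub hL0]
      ring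
    have hPQ2 : (P*Q)^2 = X^2 * L ^ (2*D - 6*D) := by
      rw [hPQ, mul_pow, ← Real.rpow_natCast (L ^ (D - 3*D)) 2, ← Real.rpow_mul hL0.le,
        show (D - 3*D) * ((2:ℕ):ℝ) = 2*D - 6*D by push_cast; ring]
    have c5 : (N/8) / c^2 ≤ 5 * B * L ^ (-D) := by
      rw [h6]
      calc (N/8) * ((q:ℝ)*Q)^2 ≤ (N/8) * (P*Q)^2 :=
            mul_le_mul_of_nonneg_left h7 (by positivity)
        _ = (5/8) * B * (L⁻¹ * L ^ (2*D - 6*D)) := by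
            rw [hPQ2, hN_def, ← hXB]
            ring
        _ = (5/8) * B * L ^ (-1 + (2*D - 6*D)) := by
            rw [Real.rpow_add hL0, Real.rpow_neg_one]
        _ ≤ (5/8) * B * L ^ (-D) := by
            exact mul_le_mul_of_nonneg_left
              (Real.rpow_le_rpow_of_exponent_le hL1 (by linarith)) (by positivity)
        _ ≤ 5 * B * L ^ (-D) := by
            have ht : (0:ℝ) ≤ L ^ (-D) := Real.rpow_nonneg hL0.le _
            linarith [mul_nonneg hB0.le ht]
    linarith
  have hCge : (0:ℝ) ≤ 2500 * M ^ (4*D-4) := by positivity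
  have htD : (0:ℝ) ≤ L ^ (-D) := Real.rpow_nonneg hL0.le _
  have hfive : 5 * B * L ^ (-D) ≤ (5 + 2500 * M ^ (4*D-4)) * B * L ^ (-D) := by
    have hbt : (0:ℝ) ≤ B * L ^ (-D) := mul_nonneg hB0.le htD
    linarith [mul_nonneg hCge hbt]
  constructor
  · have hmeas : MeasurableSet {l : ℝ | c ≤ |l| ∧ |l| ≤ 1/2} := by
      have he : {l : ℝ | c ≤ |l| ∧ |l| ≤ 1/2} = (fun l : ℝ => |l|) ⁻¹' (Set.Icc c (1/2)) := rfl
      rw [he]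
      exact continuous_abs.measurable measurableSet_Icc
    exact (key _ hmeas (fun l hl => hl)).trans hfive
  · rcases le_or_gt c (1/2) with hc12 | hc12
    · have hts : Set.Icc (-c) c ⊆ Set.Icc (-(1/2):ℝ) (1/2) :=
        Set.Icc_subset_Icc (by linarith) hc12
      have hIs : IntegrableOn (trigProd β η B) (Set.Icc (-(1/2):ℝ) (1/2)) volume :=
        hcont.integrableOn_Icc
      have hdiff := integral_diff (measurableSet_Icc : MeasurableSet (Set.Icc (-c) c)) hIs hts
        (f := trigProd β η B)
      rw [← hdiff]
      refine (key _ (measurableSet_Icc.diff measurableSet_Icc) ?_).trans hfive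
      intro l hl
      obtain ⟨hls, hlt⟩ := hl
      have habs2 : |l| ≤ 1/2 := abs_le.mpr ⟨hls.1, hls.2⟩
      have hge : c ≤ |l| := by
        rw [Set.mem_Icc] at hlt
        rcases not_and_or.mp hlt with h | h
        · push_neg at h
          rw [abs_of_neg (by linarith)]
          linarith
        · push_neg at h
          rw [abs_of_pos (by linarith)]
          linarith
      exact ⟨hge, habs2⟩
    · have hLM : L ≤ M := by
        rcases hMB with h | h
        · exact h
        · exfalso
          have hQ2 : 2 ≤ Q := by
            rw [hQX, le_div_iff₀ hLD0]
            linarith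
          have hq2 : 2 ≤ (q:ℝ) * Q :=
            le_trans hQ2 (le_mul_of_one_le_left hQ0.le (by exact_mod_cast hq))
          have : c ≤ 1/2 := by
            rw [hc_def, div_le_div_iff₀ hqQ0 (by norm_num : (0:ℝ) < 2)]
            linarith
          linarith
      have hvol1 : (volume (Set.Icc (-(1/2):ℝ) (1/2))).toReal = 1 := by
        rw [Real.volume_Icc]
        norm_num
      have hvol2 : (volume (Set.Icc (-c) c)).toReal = 2*c := by
        rw [Real.volume_Icc, ENNReal.toReal_ofReal (by linarith)]
        ring
      have h1 : ‖∫ l in Set.Icc (-(1/2):ℝ) (1/2), trigProd β η B l‖ ≤ N^4 * 1 := by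
        have hh := norm_setIntegral_le_of_norm_le_const (μ := volume)
          (s := Set.Icc (-(1/2):ℝ) (1/2)) (C := N^4)
          (isCompact_Icc.measure_lt_top)
          (fun x _ => by exact hbound_triv x)
        have hh2 := hh
        rwa [measureReal_def, hvol1] at hh2
      have h2 : ‖∫ l in Set.Icc (-c) c, trigProd β η B l‖ ≤ N^4 * (2*c) := by
        have hh := norm_setIntegral_le_of_norm_le_const (μ := volume)
          (s := Set.Icc (-c) c) (C := N^4)
          (isCompact_Icc.measure_lt_top)
          (fun x _ => by exact hbound_triv x)
        have hh2 := hh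
        rwa [measureReal_def, hvol2] at hh2
      have hnorm := (norm_sub_le (∫ l in Set.Icc (-(1/2):ℝ) (1/2), trigProd β η B l)
        (∫ l in Set.Icc (-c) c, trigProd β η B l)).trans (add_le_add h1 h2)
      refine hnorm.trans ?_
      have s1 : N^4 * 1 + N^4 * (2*c) ≤ N^4 * (4*c) := by
        linarith [mul_nonneg (pow_nonneg hN0 4) (by linarith : (0:ℝ) ≤ 2*c - 1)]
      have s2 : N^4 * (4*c) ≤ N^4 * (4 * (L^(3*D)/X)) := by
        refine mul_le_mul_of_nonneg_left ?_ (pow_nonneg hN0 4)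
        linarith
      have s3 : N^4 * (4 * (L^(3*D)/X))
          = 2500 * B * (L ^ (3*D) * L⁻¹ * L⁻¹ * L⁻¹ * L⁻¹) := by
        rw [hN_def, ← hXB]
        field_simp
        ring
      have s4 : L ^ (3*D) * L⁻¹ * L⁻¹ * L⁻¹ * L⁻¹ = L ^ (3*D - 4) := by
        rw [show 3*D - 4 = 3*D + -1 + -1 + -1 + -1 by ring,
          Real.rpow_add hL0, Real.rpow_add hL0, Real.rpow_add hL0, Real.rpow_add hL0,
          Real.rpow_neg_one]
      have s5 : L ^ (3*D - 4) = L ^ (4*D - 4) * L ^ (-D) := by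
        rw [show 3*D - 4 = (4*D - 4) + (-D) by ring, Real.rpow_add hL0]
      have s6 : L ^ (4*D - 4) ≤ M ^ (4*D - 4) :=
        Real.rpow_le_rpow hL0.le hLM (by linarith)
      have s7 : 2500 * B * (L ^ (3*D - 4)) ≤ 2500 * M ^ (4*D-4) * B * L ^ (-D) := by
        rw [s5]
        calc 2500 * B * (L ^ (4*D-4) * L ^ (-D))
            ≤ 2500 * B * (M ^ (4*D-4) * L ^ (-D)) := by
              refine mul_le_mul_of_nonneg_left ?_ (by positivity)
              exact mul_le_mul_of_nonneg_right s6 htD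
          _ = 2500 * M ^ (4*D-4) * B * L ^ (-D) := by ring
      have s8 : 2500 * M ^ (4*D-4) * B * L ^ (-D)
          ≤ (5 + 2500 * M ^ (4*D-4)) * B * L ^ (-D) := by
        have hbt : (0:ℝ) ≤ B * L ^ (-D) := mul_nonneg hB0.le htD
        linarith
      calc N^4 * 1 + N^4 * (2*c) ≤ N^4 * (4*c) := s1
        _ ≤ N^4 * (4 * (L^(3*D)/X)) := s2
        _ = 2500 * B * (L ^ (3*D) * L⁻¹ * L⁻¹ * L⁻¹ * L⁻¹) := s3
        _ = 2500 * B * (L ^ (3*D - 4)) := by rw [s4]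
        _ ≤ 2500 * M ^ (4*D-4) * B * L ^ (-D) := s7
        _ ≤ (5 + 2500 * M ^ (4*D-4)) * B * L ^ (-D) := s8

/-- The completion of the singular integral (Section 2.1): with `P = (log B)^D` and
`Q = B^{1/3}P⁻³`, for `1 ≤ q ≤ P` the integral of `∏ⱼ Σ_{m ∈ I_j} e(βⱼλm)` over
`1/(qQ) ≤ |λ| ≤ 1/2` is `O(B (log B)^{-D})`; in particular the integrals over
`[-1/2, 1/2]` and over `[-1/(qQ), 1/(qQ)]` differ by `O(B (log B)^{-D})`. -/
theorem singular_integral_completion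
    (β : Fin 4 → ℤ) (hβ : ∀ j, β j = 1 ∨ β j = -1)
    (η : Fin 4 → ℝ) (hη : ∀ j, 0 < η j)
    (hrel : (β 0 : ℝ) * η 0 + (β 1 : ℝ) * η 1 + (β 2 : ℝ) * η 2 + (β 3 : ℝ) * η 3 = 0)
    (D : ℝ) (hD : 1 ≤ D) :
    ∃ C : ℝ, 0 < C ∧ ∀ B : ℝ, 3 ≤ B →
      ∀ P Q : ℝ, P = Real.log B ^ D → Q = B ^ ((1 : ℝ) / 3) / P ^ 3 →
      ∀ q : ℕ, 1 ≤ q → (q : ℝ) ≤ P →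
        ‖(∫ l in {l : ℝ | 1 / (q * Q) ≤ |l| ∧ |l| ≤ 1 / 2},
            trigProd β η B l)‖ ≤ C * B * Real.log B ^ (-D) ∧
        ‖((∫ l in Set.Icc (-(1 / 2) : ℝ) (1 / 2), trigProd β η B l) -
            ∫ l in Set.Icc (-(1 / (q * Q))) (1 / (q * Q)), trigProd β η B l)‖ ≤
          C * B * Real.log B ^ (-D) := by
  obtain ⟨B₀, hB₀3, hB₀⟩ := exists_B0 D
  set M : ℝ := max 1 (Real.log B₀) with hM_def
  have hM1 : (1:ℝ) ≤ M := le_max_left _ _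
  have hM0 : (0:ℝ) < M := by linarith
  refine ⟨5 + 2500 * M ^ (4*D-4), by positivity, fun B hB P Q hP hQ q hq hqP => ?_⟩
  apply main_est β hβ η D hD M hM1 B hB P Q hP hQ q hq hqP
  rcases le_or_gt B₀ B with h | h
  · exact Or.inr (hB₀ B h)
  · refine Or.inl (le_trans ?_ (le_max_right 1 (Real.log B₀)))
    exact Real.log_le_log (by linarith) h.le
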